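/- In every topological model M, for all formulas φ, ψ and every point s: M, s satisfies [φ]Iψ if and only if M, s satisfies φ → I[φ]ψ. (Soundness of the interior-modality reduction axiom for public announcements in topological models.) -/

import Mathlib

/-- `τ` is a topology on the set `A`: a collection of subsets of `A` containing the
empty set and `A`, closed under arbitrary unions and under (nonempty) finite
intersections. -/
def IsTopologyOn {T : Type} (A : Set T) (τ : Set (Set T)) : Prop :=
  (∀ U ∈ τ, U ⊆ A) ∧ (∅ : Set T) ∈ τ ∧ A ∈ τ ∧
    (∀ C ⊆ τ, ⋃₀ C ∈ τ) ∧
    (∀ C ⊆ τ, C.Finite → C.Nonempty → ⋂₀ C ∈ τ)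

/-- Formulas of topological public announcement logic: propositional letters,
negation, conjunction, the interior modality `I`, and public announcement `[φ]ψ`. -/
inductive TForm where
  | atom : ℕ → TForm
  | neg : TForm → TForm
  | and : TForm → TForm → TForm
  | int : TForm → TForm
  | ann : TForm → TForm → TForm
deriving DecidableEq

/-- Material implication `φ → ψ` as the derived connective `¬(φ ∧ ¬ψ)`. -/
def TForm.imp (φ ψ : TForm) : TForm := .neg (.and φ (.neg ψ))

/-- A topological model: a carrier set, a collection of subsets of it (intended to be
a topology on the carrier), and a valuation. -/
structure TopModel (T : Type) where
  carrier : Set T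
  tau : Set (Set T)
  val : ℕ → Set T

/-- The restriction of a topological model to a subset `A`: carrier `A`, the induced
collection `{O ∩ A : O ∈ τ}`, and valuation `p ↦ v(p) ∩ A`. -/
def TopModel.restrict {T : Type} (M : TopModel T) (A : Set T) : TopModel T where
  carrier := A
  tau := {V | ∃ O ∈ M.tau, V = O ∩ A}
  val := fun p => M.val p ∩ A

/-- Satisfaction `M, t ⊨ φ` in a topological model; announcing `φ` restricts the
model to the extension `(φ)^M = {u ∈ T : M, u ⊨ φ}`. -/
def TSat {T : Type} : TopModel T → TForm → T → Prop
  | M, .atom p, t => t ∈ M.val p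
  | M, .neg φ, t => ¬ TSat M φ t
  | M, .and φ ψ, t => TSat M φ t ∧ TSat M ψ t
  | M, .int φ, t => ∃ U ∈ M.tau, t ∈ U ∧ ∀ u ∈ U, TSat M φ u
  | M, .ann φ ψ, t =>
      TSat M φ t → TSat (M.restrict {u ∈ M.carrier | TSat M φ u}) ψ t

/-! Soundness rests on one observation: because every open set of `M` lies inside the
carrier, the opens of the updated model `M_φ` around `s` are exactly the traces `O ∩ (φ)^M`
of opens `O ∋ s` of `M`, so "`ψ` holds throughout such a trace in `M_φ`" says the same as
"`[φ]ψ` holds throughout `O` in `M`". -/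

namespace TopModel

variable {T : Type}

/-- The updated model `M_φ`. -/
def update (M : TopModel T) (φ : TForm) : TopModel T :=
  M.restrict {u ∈ M.carrier | TSat M φ u}

theorem tSat_imp {M : TopModel T} {φ ψ : TForm} {t : T} :
    TSat M (φ.imp ψ) t ↔ (TSat M φ t → TSat M ψ t) := by
  simp only [TForm.imp, TSat]
  tauto

theorem tSat_ann {M : TopModel T} {φ ψ : TForm} {t : T} :
    TSat M (.ann φ ψ) t ↔ (TSat M φ t → TSat (M.update φ) ψ t) :=
  Iff.rfl

theorem tSat_int {M : TopModel T} {ψ : TForm} {t : T} :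
    TSat M (.int ψ) t ↔ ∃ U ∈ M.tau, t ∈ U ∧ ∀ u ∈ U, TSat M ψ u :=
  Iff.rfl

theorem tSat_restrict_int {M : TopModel T} {A : Set T} {ψ : TForm} {t : T} :
    TSat (M.restrict A) (.int ψ) t ↔
      ∃ O ∈ M.tau, t ∈ O ∩ A ∧ ∀ u ∈ O ∩ A, TSat (M.restrict A) ψ u := by
  constructor
  · rintro ⟨_, ⟨O, hO, rfl⟩, htO, hψ⟩
    exact ⟨O, hO, htO, hψ⟩
  · rintro ⟨O, hO, htO, hψ⟩
    exact ⟨O ∩ A, ⟨O, hO, rfl⟩, htO, hψ⟩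

theorem tSat_update_int {M : TopModel T} (hτ : ∀ U ∈ M.tau, U ⊆ M.carrier)
    {φ ψ : TForm} {s : T} (hs : s ∈ M.carrier) (hφ : TSat M φ s) :
    TSat (M.update φ) (.int ψ) s ↔ TSat M (.int (.ann φ ψ)) s := by
  rw [update, tSat_restrict_int, tSat_int]
  refine exists_congr fun O => and_congr_right fun hO => ?_
  have hsA : s ∈ {u ∈ M.carrier | TSat M φ u} := ⟨hs, hφ⟩
  simp only [Set.mem_inter_iff, hsA, and_true]
  exact and_congr_right fun _ => ⟨fun h u hu hφu => h u ⟨hu, hτ O hO hu, hφu⟩,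
    fun h u ⟨hu, huA⟩ => h u hu huA.2⟩

end TopModel

/-- Interior-modality reduction axiom for PAL over topological models: at every point
`s` of the model, `[φ]Iψ ↔ (φ → I[φ]ψ)`. -/
theorem interior_reduction_sound {T : Type} (M : TopModel T)
    (hM : IsTopologyOn M.carrier M.tau) (φ ψ : TForm) (s : T) (hs : s ∈ M.carrier) :
    TSat M (.ann φ (.int ψ)) s ↔ TSat M (TForm.imp φ (.int (.ann φ ψ))) s := by
  rw [TopModel.tSat_ann, TopModel.tSat_imp]
  exact imp_congr_right fun hφ => TopModel.tSat_update_int hM.1 hs hφ
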